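/- arXiv:1608.07749 — 2 statements merged into one kernel-verified Lean document; each statement's English description precedes it below -/
import Mathlib

section
/- Let X be a finite connected cubic graph whose full automorphism group acts simply transitively on the 5-arcs of X and contains a subgroup acting simply transitively on the 4-arcs of X. Then there is no automorphism α of X of order 2 such that the subgraph of X induced on the set Fix(α) of vertices fixed by α has both a connected component isomorphic to the H-tree (the 6-vertex tree consisting of two adjacent central vertices each adjacent to two further leaves) and a connected component isomorphic to the A-tree (the 10-vertex tree consisting of a root of degree 3 whose three neighbours are each adjacent to two further leaves). -/
open SimpleGraph

/-- `g` is an automorphism of the graph `G`. -/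
def IsAut {V : Type*} (G : SimpleGraph V) (g : Equiv.Perm V) : Prop :=
  ∀ u v : V, G.Adj (g u) (g v) ↔ G.Adj u v

/-- `a` is an `s`-arc of `G`: a sequence of `s+1` pairwise distinct vertices
with consecutive vertices adjacent. -/
def IsSArc {V : Type*} (G : SimpleGraph V) (s : ℕ) (a : Fin (s + 1) → V) : Prop :=
  Function.Injective a ∧ ∀ i : Fin s, G.Adj (a i.castSucc) (a i.succ)

/-- The full automorphism group of `G` acts simply transitively on `s`-arcs. -/
def AutSimplyTransitive {V : Type*} (G : SimpleGraph V) (s : ℕ) : Prop :=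
  ∀ a b : Fin (s + 1) → V, IsSArc G s a → IsSArc G s b →
    ∃! g : Equiv.Perm V, IsAut G g ∧ ∀ i : Fin (s + 1), g (a i) = b i

/-- The subgroup `H` of permutations acts simply transitively on `s`-arcs of `G`. -/
def SubgroupSimplyTransitive {V : Type*} (G : SimpleGraph V)
    (H : Subgroup (Equiv.Perm V)) (s : ℕ) : Prop :=
  ∀ a b : Fin (s + 1) → V, IsSArc G s a → IsSArc G s b →
    ∃! g : H, ∀ i : Fin (s + 1), (g : Equiv.Perm V) (a i) = b i

/-- The full automorphism group of `G` acts transitively on arcs. -/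
def AutArcTransitive {V : Type*} (G : SimpleGraph V) : Prop :=
  ∀ a b : Fin 2 → V, IsSArc G 1 a → IsSArc G 1 b →
    ∃ g : Equiv.Perm V, IsAut G g ∧ ∀ i : Fin 2, g (a i) = b i

/-- `G` is cubic: every vertex has exactly three neighbours. -/
def IsCubic {V : Type*} (G : SimpleGraph V) : Prop :=
  ∀ v : V, (G.neighborSet v).ncard = 3

/-- `G` is bipartite: the vertex set splits into two parts so that every
edge joins the two parts. -/
def IsBipartite {V : Type*} (G : SimpleGraph V) : Prop :=
  ∃ s : Set V, ∀ u v : V, G.Adj u v → ((u ∈ s ∧ v ∉ s) ∨ (u ∉ s ∧ v ∈ s))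

/-- `g` is an automorphism of order 2 interchanging two adjacent vertices. -/
def FlipInvolution {V : Type*} (G : SimpleGraph V) (g : Equiv.Perm V) : Prop :=
  IsAut G g ∧ orderOf g = 2 ∧ ∃ u v : V, G.Adj u v ∧ g u = v ∧ g v = u

/-- The complete graph on two vertices (a single edge). -/
def K2 : SimpleGraph (Fin 2) := ⊤

/-- The star `K_{1,3}`: centre `0` adjacent to the three leaves `1`, `2`, `3`. -/
def Star3 : SimpleGraph (Fin 4) := SimpleGraph.fromRel (fun i _ => i = 0)

/-- The `H`-tree: two adjacent central vertices `0`, `1`, each adjacent to two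
further leaves. -/
def Htree : SimpleGraph (Fin 6) := SimpleGraph.fromRel (fun i j =>
  (i = 0 ∧ (j = 1 ∨ j = 2 ∨ j = 3)) ∨ (i = 1 ∧ (j = 4 ∨ j = 5)))

/-- The `A`-tree: a root `0` of degree three whose three neighbours `1`, `2`, `3`
are each adjacent to two further leaves. -/
def Atree : SimpleGraph (Fin 10) := SimpleGraph.fromRel (fun i j =>
  (i = 0 ∧ (j = 1 ∨ j = 2 ∨ j = 3)) ∨ (i = 1 ∧ (j = 4 ∨ j = 5)) ∨
  (i = 2 ∧ (j = 6 ∨ j = 7)) ∨ (i = 3 ∧ (j = 8 ∨ j = 9)))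

/-- The subgraph of `G` induced on the set of vertices fixed by `α`. -/
def FixSubgraph {V : Type*} (G : SimpleGraph V) (α : Equiv.Perm V) :
    SimpleGraph ({v : V | α v = v} : Set V) :=
  G.induce {v : V | α v = v}

/-- The connected component `c` of the subgraph of `G` induced on the fixed
points of `α` is isomorphic to the pattern graph `P`. -/
def ComponentIso {V W : Type*} (G : SimpleGraph V) (α : Equiv.Perm V)
    (c : (FixSubgraph G α).ConnectedComponent) (P : SimpleGraph W) : Prop :=
  Nonempty ((FixSubgraph G α).induce c.supp ≃g P)

/-!
Let `α` be such an involution and `H` the subgroup regular on 4-arcs. The `A`-tree contains a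
4-arc fixed by `α`, so `α ∉ H`; and since `H` is transitive on 4-arcs while the ends of that
4-arc are not adjacent, `G` has no 5-cycles. In the `H`-tree, `α` fixes the 3-arc
`(a₁, u, v, b₁)` joining two leaves and swaps the two neighbours `p₁, p₂` of `a₁` and the two
neighbours `w₁, w₂` of `b₁` outside the tree. The element `h ∈ H` sending
`(a₁, u, v, b₁, w₁)` to `(a₁, u, v, b₁, w₂)` cannot fix `p₁` (it would fix a 4-arc), so it
swaps `p₁, p₂` as well. Hence `α` and `h` agree on `(p₁, a₁, u, v, b₁, w₁)`, which is a 5-arc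
as there are no 5-cycles, and regularity on 5-arcs gives `α = h ∈ H`.
-/

section

variable {V : Type*} {G : SimpleGraph V} {s : ℕ}

namespace IsSArc

lemma map_isAut {a : Fin (s + 1) → V} {g : Equiv.Perm V} (ha : IsSArc G s a)
    (hg : IsAut G g) : IsSArc G s (g ∘ a) :=
  ⟨g.injective.comp ha.1, fun i => (hg _ _).2 (ha.2 i)⟩

lemma map_embedding {W : Type*} {P : SimpleGraph W} {a : Fin (s + 1) → W} (ha : IsSArc P s a)
    (f : P ↪g G) : IsSArc G s (f ∘ a) :=
  ⟨f.injective.comp ha.1, fun i => f.map_adj_iff.2 (ha.2 i)⟩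

lemma snoc {a : Fin (s + 1) → V} {x : V} (ha : IsSArc G s a) (hx : G.Adj (a (Fin.last s)) x)
    (hxa : x ∉ Set.range a) : IsSArc G (s + 1) (Fin.snoc a x) :=
  ⟨Fin.snoc_injective_iff.2 ⟨ha.1, hxa⟩,
    Fin.lastCases (by simpa using hx) fun i => by
      rw [Fin.succ_castSucc]; simpa only [Fin.snoc_castSucc] using ha.2 i⟩

lemma cons {a : Fin (s + 1) → V} {x : V} (ha : IsSArc G s a) (hx : G.Adj x (a 0))
    (hxa : x ∉ Set.range a) : IsSArc G (s + 1) (Fin.cons x a) :=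
  ⟨Fin.cons_injective_iff.2 ⟨hxa, ha.1⟩,
    Fin.cases (by simpa using hx) fun i => by
      rw [← Fin.succ_castSucc]; simpa only [Fin.cons_succ] using ha.2 i⟩

end IsSArc

lemma AutSimplyTransitive.eq_of_forall_apply_eq (hG : AutSimplyTransitive G s)
    {a : Fin (s + 1) → V} (ha : IsSArc G s a) {g g' : Equiv.Perm V} (hg : IsAut G g)
    (hg' : IsAut G g') (heq : ∀ i, g (a i) = g' (a i)) : g = g' :=
  (hG a (g ∘ a) ha (ha.map_isAut hg)).unique ⟨hg, fun _ => rfl⟩ ⟨hg', fun i => (heq i).symm⟩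

namespace SubgroupSimplyTransitive

variable {H : Subgroup (Equiv.Perm V)}

lemma eq_one_of_forall_apply_eq (hH : SubgroupSimplyTransitive G H s) {a : Fin (s + 1) → V}
    (ha : IsSArc G s a) {g : Equiv.Perm V} (hg : g ∈ H) (hfix : ∀ i, g (a i) = a i) : g = 1 :=
  congrArg Subtype.val ((hH a a ha ha).unique (y₁ := ⟨g, hg⟩) (y₂ := 1) hfix fun _ => rfl)

lemma not_adj_of_not_adj (hH : SubgroupSimplyTransitive G H s) (hHaut : ∀ g ∈ H, IsAut G g)
    {a b : Fin (s + 1) → V} (ha : IsSArc G s a) (hb : IsSArc G s b)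
    (hbend : ¬ G.Adj (b 0) (b (Fin.last s))) : ¬ G.Adj (a 0) (a (Fin.last s)) := by
  obtain ⟨g, hg, -⟩ := hH a b ha hb
  intro hadj
  apply hbend
  rw [← hg 0, ← hg (Fin.last s)]
  exact (hHaut g g.2 _ _).2 hadj

end SubgroupSimplyTransitive

lemma IsCubic.exists_adj_eq_or_eq_or_eq (hG : IsCubic G) {v u : V} (hvu : G.Adj v u) :
    ∃ p q : V, p ≠ q ∧ p ≠ u ∧ q ≠ u ∧ G.Adj v p ∧ G.Adj v q ∧
      ∀ x : V, G.Adj v x → x = u ∨ x = p ∨ x = q := by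
  have htwo : (G.neighborSet v \ {u}).ncard = 2 := by
    rw [Set.ncard_sdiff_singleton_of_mem (show u ∈ G.neighborSet v from hvu), hG v]
  obtain ⟨p, q, hpq, hpq'⟩ := Set.ncard_eq_two.1 htwo
  have hmem (x : V) : (G.Adj v x ∧ x ≠ u) ↔ (x = p ∨ x = q) := by
    simpa using Set.ext_iff.1 hpq' x
  obtain ⟨hp, hpu⟩ := (hmem p).2 (Or.inl rfl)
  obtain ⟨hq, hqu⟩ := (hmem q).2 (Or.inr rfl)
  refine ⟨p, q, hpq, hpu, hqu, hp, hq, fun x hx => ?_⟩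
  by_cases hxu : x = u
  · exact Or.inl hxu
  · exact Or.inr ((hmem x).1 ⟨hx, hxu⟩)

lemma IsAut.apply_eq_and_apply_eq_of_apply_ne {g : Equiv.Perm V} (hg : IsAut G g)
    {v u p q : V} (hN : ∀ x, G.Adj v x → x = u ∨ x = p ∨ x = q) (hp : G.Adj v p)
    (hq : G.Adj v q) (hpq : p ≠ q) (hpu : p ≠ u) (hqu : q ≠ u) (hv : g v = v) (hu : g u = u)
    (hgp : g p ≠ p) : g p = q ∧ g q = p := by
  have hadj {x : V} (hx : G.Adj v x) : G.Adj v (g x) := by simpa [hv] using (hg v x).2 hx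
  have hgp' : g p = q := by
    rcases hN _ (hadj hp) with h | h | h
    · exact absurd (g.injective (h.trans hu.symm)) hpu
    · exact absurd h hgp
    · exact h
  refine ⟨hgp', ?_⟩
  rcases hN _ (hadj hq) with h | h | h
  · exact absurd (g.injective (h.trans hu.symm)) hqu
  · exact h
  · exact absurd (g.injective (hgp'.trans h.symm)) hpq

lemma htree_adj_two_iff (k : Fin 6) : Htree.Adj 2 k ↔ k = 0 := by
  simp only [Htree, fromRel_adj]; decide +revert

lemma htree_adj_four_iff (k : Fin 6) : Htree.Adj 4 k ↔ k = 1 := by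
  simp only [Htree, fromRel_adj]; decide +revert

lemma isSArc_htree : IsSArc Htree 3 ![2, 0, 1, 4] :=
  ⟨by decide, by simp only [Htree, fromRel_adj]; decide⟩

lemma isSArc_atree : IsSArc Atree 4 ![4, 1, 0, 2, 6] :=
  ⟨by decide, by simp only [Atree, fromRel_adj]; decide⟩

lemma atree_not_adj_four_six : ¬ Atree.Adj 4 6 := by
  simp only [Atree, fromRel_adj]; decide

section FixedComponent

variable {W : Type*} {α : Equiv.Perm V} {c : (FixSubgraph G α).ConnectedComponent}
  {P : SimpleGraph W}

def componentEmbedding (e : (FixSubgraph G α).induce c.supp ≃g P) : P ↪g G :=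
  (Embedding.induce {v | α v = v}).comp ((Embedding.induce c.supp).comp e.symm.toEmbedding)

lemma componentEmbedding_fixed (e : (FixSubgraph G α).induce c.supp ≃g P) (i : W) :
    α (componentEmbedding e i) = componentEmbedding e i :=
  (e.symm i).1.2

lemma mem_range_componentEmbedding (e : (FixSubgraph G α).induce c.supp ≃g P) {i : W} {w : V}
    (hw : α w = w) (hadj : G.Adj (componentEmbedding e i) w) :
    w ∈ Set.range (componentEmbedding e) := by
  have hAdjFix : (FixSubgraph G α).Adj (e.symm i).1 ⟨w, hw⟩ := hadj
  have hmem : (⟨w, hw⟩ : {v : V | α v = v}) ∈ c.supp := by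
    rw [ConnectedComponent.mem_supp_iff, ← (ConnectedComponent.mem_supp_iff _ _).1 (e.symm i).2]
    exact ConnectedComponent.connectedComponentMk_eq_of_adj hAdjFix.symm
  exact ⟨e ⟨⟨w, hw⟩, hmem⟩, show ((e.symm (e ⟨⟨w, hw⟩, hmem⟩)).1).1 = w by simp⟩

lemma exists_swapped_neighbors_of_leaf (hG : IsCubic G) (hα : IsAut G α)
    (e : (FixSubgraph G α).induce c.supp ≃g P) {i j : W} (hleaf : ∀ k, P.Adj i k ↔ k = j) :
    ∃ p q : V, p ≠ q ∧ p ≠ componentEmbedding e j ∧ q ≠ componentEmbedding e j ∧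
      G.Adj (componentEmbedding e i) p ∧ G.Adj (componentEmbedding e i) q ∧ α p = q ∧ α q = p ∧
      ∀ x, G.Adj (componentEmbedding e i) x → x = componentEmbedding e j ∨ x = p ∨ x = q := by
  set f := componentEmbedding e
  obtain ⟨p, q, hpq, hpu, hqu, hp, hq, hN⟩ :=
    hG.exists_adj_eq_or_eq_or_eq (f.map_adj_iff.2 ((hleaf j).2 rfl))
  have hαp : α p ≠ p := fun hfix => by
    obtain ⟨k, rfl⟩ := mem_range_componentEmbedding e hfix hp
    exact hpu (congrArg f ((hleaf k).1 (f.map_adj_iff.1 hp)))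
  obtain ⟨hαp', hαq⟩ := hα.apply_eq_and_apply_eq_of_apply_ne hN hp hq hpq hpu hqu
    (componentEmbedding_fixed e i) (componentEmbedding_fixed e j) hαp
  exact ⟨p, q, hpq, hpu, hqu, hp, hq, hαp', hαq, hN⟩

lemma exists_fixed_isSArc_of_atree_component (e : (FixSubgraph G α).induce c.supp ≃g Atree) :
    ∃ a : Fin 5 → V, IsSArc G 4 a ∧ (∀ i, α (a i) = a i) ∧ ¬ G.Adj (a 0) (a (Fin.last 4)) :=
  ⟨_, isSArc_atree.map_embedding (componentEmbedding e), fun _ => componentEmbedding_fixed e _,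
    fun h => atree_not_adj_four_six ((componentEmbedding e).map_adj_iff.1 h)⟩

theorem mem_of_htree_component (hG : IsCubic G) (h5 : AutSimplyTransitive G 5)
    {H : Subgroup (Equiv.Perm V)} (hHaut : ∀ g ∈ H, IsAut G g)
    (hH : SubgroupSimplyTransitive G H 4)
    (hno5 : ∀ a : Fin 5 → V, IsSArc G 4 a → ¬ G.Adj (a 0) (a (Fin.last 4)))
    (hα : IsAut G α) (e : (FixSubgraph G α).induce c.supp ≃g Htree) : α ∈ H := by
  set f := componentEmbedding e
  set core : Fin 4 → V := f ∘ ![2, 0, 1, 4]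
  have hcore : IsSArc G 3 core := isSArc_htree.map_embedding f
  have hαcore (i : Fin 4) : α (core i) = core i := componentEmbedding_fixed e _
  have not_mem_core {x : V} (hx : α x ≠ x) : x ∉ Set.range core := by
    rintro ⟨i, rfl⟩; exact hx (hαcore i)
  obtain ⟨p₁, p₂, hp₁₂, hp₁u, hp₂u, hadjp₁, hadjp₂, hαp₁, -, hN⟩ :=
    exists_swapped_neighbors_of_leaf hG hα e htree_adj_two_iff
  obtain ⟨w₁, w₂, hw₁₂, -, -, hadjw₁, hadjw₂, hαw₁, hαw₂, -⟩ :=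
    exists_swapped_neighbors_of_leaf hG hα e htree_adj_four_iff
  have hQ₁ : IsSArc G 4 (Fin.snoc core w₁) :=
    hcore.snoc hadjw₁ (not_mem_core (hαw₁.trans_ne hw₁₂.symm))
  have hQ₂ : IsSArc G 4 (Fin.snoc core w₂) :=
    hcore.snoc hadjw₂ (not_mem_core (hαw₂.trans_ne hw₁₂))
  obtain ⟨⟨h, hH_mem⟩, hh, -⟩ := hH _ _ hQ₁ hQ₂
  obtain ⟨hhcore, hhw⟩ := Fin.forall_fin_succ'.1 hh
  simp only [Fin.snoc_castSucc, Fin.snoc_last] at hhcore hhw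
  have hpw : p₁ ≠ w₁ := by
    rintro rfl
    exact hno5 _ hQ₁ (by rw [Fin.snoc_last]; exact hadjp₁)
  have hhp : h p₁ = p₂ := by
    refine ((hHaut h hH_mem).apply_eq_and_apply_eq_of_apply_ne hN hadjp₁ hadjp₂ hp₁₂ hp₁u hp₂u
      (hhcore 0) (hhcore 1) fun hfix => hw₁₂ ?_).1
    have hR := hcore.cons hadjp₁.symm (not_mem_core (hαp₁.trans_ne hp₁₂.symm))
    have h1 := hH.eq_one_of_forall_apply_eq hR hH_mem (Fin.cases hfix hhcore)
    simpa [h1] using hhw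
  have hB := hQ₁.cons (x := p₁) hadjp₁.symm (by
    simpa [hpw] using not_mem_core (hαp₁.trans_ne hp₁₂.symm))
  have hαh : α = h := h5.eq_of_forall_apply_eq hB hα (hHaut h hH_mem)
    (Fin.cases (by simp only [Fin.cons_zero, hαp₁, hhp])
      (Fin.lastCases (by simp only [Fin.cons_succ, Fin.snoc_last, hαw₁, hhw])
        fun i => by simp only [Fin.cons_succ, Fin.snoc_castSucc, hαcore, hhcore]))
  exact hαh ▸ hH_mem

end FixedComponent

end

theorem stmt9_general {V : Type*} (G : SimpleGraph V)
    (hcubic : IsCubic G)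
    (hreg : AutSimplyTransitive G 5)
    (hsub : ∃ H : Subgroup (Equiv.Perm V),
      (∀ g ∈ H, IsAut G g) ∧ SubgroupSimplyTransitive G H 4) :
    ¬ ∃ α : Equiv.Perm V, IsAut G α ∧ orderOf α = 2 ∧
      (∃ c : (FixSubgraph G α).ConnectedComponent, ComponentIso G α c Htree) ∧
      (∃ c : (FixSubgraph G α).ConnectedComponent, ComponentIso G α c Atree) := by
  rintro ⟨α, hα, hαord, ⟨_, ⟨eH⟩⟩, ⟨_, ⟨eA⟩⟩⟩
  obtain ⟨H, hHaut, hH⟩ := hsub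
  obtain ⟨a, ha, hαa, haend⟩ := exists_fixed_isSArc_of_atree_component eA
  have hαH : α ∉ H := fun hmem => by
    simp [hH.eq_one_of_forall_apply_eq ha hmem hαa] at hαord
  exact hαH (mem_of_htree_component hcubic hreg hHaut hH
    (fun b hb => hH.not_adj_of_not_adj hHaut hb ha haend) hα eH)

/-- in a connected cubic 5-regular graph admitting a 4-regular
subgroup, no order-2 automorphism has both an `H`-tree rigid cell and an
`A`-tree rigid cell. -/
theorem stmt9 {V : Type*} [Fintype V] (G : SimpleGraph V)
    (hconn : G.Connected) (hcubic : IsCubic G)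
    (hreg : AutSimplyTransitive G 5)
    (hsub : ∃ H : Subgroup (Equiv.Perm V),
      (∀ g ∈ H, IsAut G g) ∧ SubgroupSimplyTransitive G H 4) :
    ¬ ∃ α : Equiv.Perm V, IsAut G α ∧ orderOf α = 2 ∧
      (∃ c : (FixSubgraph G α).ConnectedComponent, ComponentIso G α c Htree) ∧
      (∃ c : (FixSubgraph G α).ConnectedComponent, ComponentIso G α c Atree) :=
  stmt9_general G hcubic hreg hsub
end

section
/- Let X be a finite connected cubic graph whose full automorphism group acts simply transitively on the 2-arcs of X and contains no automorphism of order 2 that interchanges two adjacent vertices (i.e., X is a cubic symmetric graph of type {2^2}). Then every automorphism of X is an even permutation of the vertex set; that is, X has no odd automorphisms. -/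
open SimpleGraph

set_option maxHeartbeats 1600000
section AuxGeneral
open Equiv Equiv.Perm Finset

-- generic: involution on a finset without fixed points => even card
lemma even_card_of_inv {α : Type*} [DecidableEq α] (f : α → α) :
    ∀ S : Finset α, (∀ a ∈ S, f a ∈ S) → (∀ a ∈ S, f (f a) = a) →
    (∀ a ∈ S, f a ≠ a) → Even S.card := by
  intro S
  induction S using Finset.strongInduction with
  | _ S ih =>
    intro hmem hinv hne
    rcases S.eq_empty_or_nonempty with rfl | ⟨a, ha⟩
    · simp
    · have hfa : f a ∈ S := hmem a ha
      have hfaa : f a ≠ a := hne a ha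
      set S' := (S.erase a).erase (f a) with hS'
      have hsub : S' ⊂ S := by
        refine Finset.ssubset_of_subset_of_ssubset ?_ (Finset.erase_ssubset ha)
        exact Finset.erase_subset _ _
      have hSmem : ∀ b ∈ S', b ∈ S := fun b hb => Finset.mem_of_mem_erase (Finset.mem_of_mem_erase hb)
      have h1 : ∀ b ∈ S', f b ∈ S' := by
        intro b hb
        have hbS := hSmem b hb
        have hba : b ≠ f a := Finset.ne_of_mem_erase hb
        have hba' : b ≠ a := Finset.ne_of_mem_erase (Finset.mem_of_mem_erase hb)
        refine Finset.mem_erase.2 ⟨?_, Finset.mem_erase.2 ⟨?_, hmem b hbS⟩⟩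
        · intro h; exact hba' (by rw [← hinv b hbS, h, hinv a ha])
        · intro h; exact hba (by rw [← hinv b hbS, h])
      have hc2 : 1 < S.card := Finset.one_lt_card.2 ⟨a, ha, f a, hfa, hfaa.symm⟩
      have hcard : S'.card = S.card - 2 := by
        rw [hS', Finset.card_erase_of_mem (Finset.mem_erase.2 ⟨hfaa, hfa⟩),
          Finset.card_erase_of_mem ha]
        omega
      have hev := ih S' hsub (fun b hb => h1 b hb)
        (fun b hb => hinv b (hSmem b hb)) (fun b hb => hne b (hSmem b hb))
      rcases hev with ⟨k, hk⟩
      exact ⟨k + 1, by omega⟩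


lemma free8 {α : Type*} [DecidableEq α] (e ρ : Equiv.Perm α) :
    ∀ S : Finset α,
      (∀ a ∈ S, e a ∈ S) → (∀ a ∈ S, ρ a ∈ S) →
      (∀ a : α, e (e (e (e a))) = a) → (∀ a : α, ρ (ρ a) = a) →
      (∀ a : α, e (ρ a) = ρ (e a)) →
      (∀ a ∈ S, e a ≠ a) → (∀ a ∈ S, e (e a) ≠ a) →
      (∀ a ∈ S, ρ a ≠ a) → (∀ a ∈ S, ρ a ≠ e a) →
      (∀ a ∈ S, ρ a ≠ e (e a)) → (∀ a ∈ S, ρ a ≠ e (e (e a))) →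
      8 ∣ S.card := by
  intro S
  induction S using Finset.strongInduction with
  | _ S ih =>
    intro heS hρS he4 hρ2 hcomm h1 h2 hr0 hr1 hr2 hr3
    rcases S.eq_empty_or_nonempty with rfl | ⟨a, ha⟩
    · simp
    have einj := e.injective
    have ρinj := ρ.injective
    have ha1 : e a ∈ S := heS a ha
    have ha2 : e (e a) ∈ S := heS _ ha1
    have ha3 : e (e (e a)) ∈ S := heS _ ha2
    -- distinctness in the first row
    have ne10 : e a ≠ a := h1 a ha
    have ne20 : e (e a) ≠ a := h2 a ha
    have ne30 : e (e (e a)) ≠ a := by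
      intro h
      have := congrArg e h
      rw [he4 a] at this
      exact ne10 this.symm
    have ne21 : e (e a) ≠ e a := fun h => ne10 (einj h)
    have ne31 : e (e (e a)) ≠ e a := fun h => ne20 (einj h)
    have ne32 : e (e (e a)) ≠ e (e a) := fun h => ne10 (einj (einj h))
    -- cross facts : ρ (e^i a) ≠ e^j a for all i j
    have c00 : ρ a ≠ a := hr0 a ha
    have c01 : ρ a ≠ e a := hr1 a ha
    have c02 : ρ a ≠ e (e a) := hr2 a ha
    have c03 : ρ a ≠ e (e (e a)) := hr3 a ha
    have c10 : ρ (e a) ≠ a := by have := hr3 (e a) ha1; rwa [he4 a] at this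
    have c11 : ρ (e a) ≠ e a := hr0 (e a) ha1
    have c12 : ρ (e a) ≠ e (e a) := hr1 (e a) ha1
    have c13 : ρ (e a) ≠ e (e (e a)) := hr2 (e a) ha1
    have c20 : ρ (e (e a)) ≠ a := by have := hr2 (e (e a)) ha2; rwa [he4 a] at this
    have c21 : ρ (e (e a)) ≠ e a := by
      have := hr3 (e (e a)) ha2
      rwa [he4 (e a)] at this
    have c22 : ρ (e (e a)) ≠ e (e a) := hr0 (e (e a)) ha2
    have c23 : ρ (e (e a)) ≠ e (e (e a)) := hr1 (e (e a)) ha2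
    have c30 : ρ (e (e (e a))) ≠ a := by have := hr1 (e (e (e a))) ha3; rwa [he4 a] at this
    have c31 : ρ (e (e (e a))) ≠ e a := by
      have := hr2 (e (e (e a))) ha3
      rwa [he4 (e a)] at this
    have c32 : ρ (e (e (e a))) ≠ e (e a) := by
      have := hr3 (e (e (e a))) ha3
      rwa [he4 (e (e a))] at this
    have c33 : ρ (e (e (e a))) ≠ e (e (e a)) := hr0 (e (e (e a))) ha3
    set O1 : Finset α := {a, e a, e (e a), e (e (e a))} with hO1
    set O : Finset α := O1 ∪ O1.image ρ with hO
    have hmemO1 : ∀ x, x ∈ O1 ↔ (x = a ∨ x = e a ∨ x = e (e a) ∨ x = e (e (e a))) := by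
      intro x; simp [hO1]
    have hcardO1 : O1.card = 4 := by
      rw [hO1]
      rw [Finset.card_insert_of_notMem, Finset.card_insert_of_notMem,
        Finset.card_insert_of_notMem, Finset.card_singleton]
      · simp [ne32.symm]
      · simp [ne21.symm, ne31.symm]
      · simp [ne10.symm, ne20.symm, ne30.symm]
    have hdisj : Disjoint O1 (O1.image ρ) := by
      rw [Finset.disjoint_left]
      intro x hx hx'
      rw [Finset.mem_image] at hx'
      obtain ⟨y, hy, rfl⟩ := hx'
      rw [hmemO1] at hx hy
      rcases hy with rfl | rfl | rfl | rfl <;>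
        rcases hx with h | h | h | h <;>
        first
          | exact c00 h | exact c01 h | exact c02 h | exact c03 h
          | exact c10 h | exact c11 h | exact c12 h | exact c13 h
          | exact c20 h | exact c21 h | exact c22 h | exact c23 h
          | exact c30 h | exact c31 h | exact c32 h | exact c33 h
    have hcardO : O.card = 8 := by
      rw [hO, Finset.card_union_of_disjoint hdisj,
        Finset.card_image_of_injective _ ρinj, hcardO1]
    have hOS : O ⊆ S := by
      intro x hx
      rw [hO, Finset.mem_union] at hx
      rcases hx with hx | hx
      · rw [hmemO1] at hx
        rcases hx with rfl | rfl | rfl | rfl <;> assumption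
      · rw [Finset.mem_image] at hx
        obtain ⟨y, hy, rfl⟩ := hx
        rw [hmemO1] at hy
        rcases hy with rfl | rfl | rfl | rfl <;> exact hρS _ (by assumption)
    -- O is closed under e and ρ
    have hOe : ∀ x ∈ O, e x ∈ O := by
      intro x hx
      rw [hO, Finset.mem_union] at hx ⊢
      rcases hx with hx | hx
      · rw [hmemO1] at hx
        rcases hx with rfl | rfl | rfl | rfl
        · exact Or.inl (by rw [hmemO1]; tauto)
        · exact Or.inl (by rw [hmemO1]; tauto)
        · exact Or.inl (by rw [hmemO1]; tauto)
        · refine Or.inl ?_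
          rw [he4 a, hmemO1]; tauto
      · rw [Finset.mem_image] at hx
        obtain ⟨y, hy, rfl⟩ := hx
        rw [hmemO1] at hy
        rcases hy with h | h | h | h <;> rw [h, hcomm]
        · exact Or.inr (Finset.mem_image.2 ⟨e a, by rw [hmemO1]; tauto, rfl⟩)
        · exact Or.inr (Finset.mem_image.2 ⟨e (e a), by rw [hmemO1]; tauto, rfl⟩)
        · exact Or.inr (Finset.mem_image.2 ⟨e (e (e a)), by rw [hmemO1]; tauto, rfl⟩)
        · rw [he4 a]
          exact Or.inr (Finset.mem_image.2 ⟨a, by rw [hmemO1]; tauto, rfl⟩)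
    have hOρ : ∀ x ∈ O, ρ x ∈ O := by
      intro x hx
      rw [hO, Finset.mem_union] at hx ⊢
      rcases hx with hx | hx
      · exact Or.inr (Finset.mem_image.2 ⟨x, hx, rfl⟩)
      · rw [Finset.mem_image] at hx
        obtain ⟨y, hy, rfl⟩ := hx
        rw [hρ2 y]
        exact Or.inl hy
    set S' := S \ O with hS'
    have hsub : S' ⊂ S := by
      refine Finset.sdiff_ssubset ?_ ?_
      · exact hOS
      · exact ⟨a, by rw [hO, Finset.mem_union, hmemO1]; tauto⟩
    have hS'mem : ∀ b ∈ S', b ∈ S ∧ b ∉ O := by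
      intro b hb; exact Finset.mem_sdiff.1 hb
    have hS'e : ∀ b ∈ S', e b ∈ S' := by
      intro b hb
      obtain ⟨hbS, hbO⟩ := hS'mem b hb
      rw [hS', Finset.mem_sdiff]
      refine ⟨heS b hbS, fun h => hbO ?_⟩
      have : e (e (e (e b))) ∈ O := hOe _ (hOe _ (hOe _ h))
      rwa [he4 b] at this
    have hS'ρ : ∀ b ∈ S', ρ b ∈ S' := by
      intro b hb
      obtain ⟨hbS, hbO⟩ := hS'mem b hb
      rw [hS', Finset.mem_sdiff]
      refine ⟨hρS b hbS, fun h => hbO ?_⟩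
      have : ρ (ρ b) ∈ O := hOρ _ h
      rwa [hρ2 b] at this
    have hcards : S'.card = S.card - 8 := by
      rw [hS', Finset.card_sdiff_of_subset hOS, hcardO]
    have hrec := ih S' hsub hS'e hS'ρ he4 hρ2 hcomm
      (fun b hb => h1 b (hS'mem b hb).1) (fun b hb => h2 b (hS'mem b hb).1)
      (fun b hb => hr0 b (hS'mem b hb).1) (fun b hb => hr1 b (hS'mem b hb).1)
      (fun b hb => hr2 b (hS'mem b hb).1) (fun b hb => hr3 b (hS'mem b hb).1)
    have h8 : 8 ≤ S.card := by
      have := Finset.card_le_card hOS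
      omega
    obtain ⟨k, hk⟩ := hrec
    exact ⟨k + 1, by omega⟩


lemma sign_aux2 {V : Type*} [Fintype V] [DecidableEq V] (σ : Equiv.Perm V)
    (h2 : σ * σ = 1) :
    ∃ k, σ.support.card = 2 * k ∧ Equiv.Perm.sign σ = (-1) ^ k := by
  have horder : orderOf σ ∣ 2 := orderOf_dvd_of_pow_eq_one (by rw [pow_two]; exact h2)
  have hall : ∀ n ∈ σ.cycleType, n = 2 := by
    intro n hn
    have hd : n ∣ 2 := dvd_trans (Multiset.dvd_lcm hn)
      (by rw [Equiv.Perm.lcm_cycleType]; exact horder)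
    have hle := Nat.le_of_dvd (by norm_num) hd
    have h2n := Equiv.Perm.two_le_of_mem_cycleType hn
    omega
  refine ⟨Multiset.card σ.cycleType, ?_, ?_⟩
  · rw [← Equiv.Perm.sum_cycleType, Multiset.eq_replicate_of_mem hall,
      Multiset.sum_replicate, smul_eq_mul, Multiset.card_replicate]
    ring
  · rw [Equiv.Perm.sign_of_cycleType]
    have hsum : σ.cycleType.sum = 2 * Multiset.card σ.cycleType := by
      rw [Multiset.eq_replicate_of_mem hall, Multiset.sum_replicate, smul_eq_mul,
        Multiset.card_replicate]; ring
    rw [hsum]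
    rw [show 2 * Multiset.card σ.cycleType + Multiset.card σ.cycleType
        = 2 * Multiset.card σ.cycleType + Multiset.card σ.cycleType from rfl,
      pow_add, pow_mul]
    norm_num

lemma sign_aux4 {V : Type*} [Fintype V] [DecidableEq V] (σ : Equiv.Perm V)
    (h4 : σ ^ 4 = 1) (hfree : ∀ z : V, σ z ≠ z → σ (σ z) ≠ z) :
    ∃ k, σ.support.card = 4 * k ∧ Equiv.Perm.sign σ = (-1) ^ k := by
  have horder : orderOf σ ∣ 4 := orderOf_dvd_of_pow_eq_one h4
  have hall : ∀ n ∈ σ.cycleType, n = 4 := by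
    intro n hn
    have hd : n ∣ 4 := dvd_trans (Multiset.dvd_lcm hn)
      (by rw [Equiv.Perm.lcm_cycleType]; exact horder)
    have hle := Nat.le_of_dvd (by norm_num) hd
    have h2n := Equiv.Perm.two_le_of_mem_cycleType hn
    have hne2 : n ≠ 2 := by
      intro rfl2
      subst rfl2
      rw [Equiv.Perm.cycleType_def, Multiset.mem_map] at hn
      obtain ⟨c, hc, hcard⟩ := hn
      rw [← Finset.mem_def] at hc
      have hswap : c.IsSwap := Equiv.Perm.card_support_eq_two.1 hcard
      obtain ⟨x, y, hxy, rfl⟩ := hswap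
      have hmem := (Equiv.Perm.mem_cycleFactorsFinset_iff).1 hc
      have hx : x ∈ (Equiv.swap x y).support := by
        rw [Equiv.Perm.support_swap hxy]; simp
      have hy : y ∈ (Equiv.swap x y).support := by
        rw [Equiv.Perm.support_swap hxy]; simp
      have hσx : σ x = y := by
        rw [← hmem.2 x hx, Equiv.swap_apply_left]
      have hσy : σ y = x := by
        rw [← hmem.2 y hy, Equiv.swap_apply_right]
      exact hfree x (by rw [hσx]; exact Ne.symm hxy) (by rw [hσx, hσy])
    -- n ∣ 4, 2 ≤ n ≤ 4, n ≠ 2 ⇒ n = 4 (n=3 does not divide 4)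
    interval_cases n
    · omega
    · omega
    · rfl
  refine ⟨Multiset.card σ.cycleType, ?_, ?_⟩
  · rw [← Equiv.Perm.sum_cycleType, Multiset.eq_replicate_of_mem hall,
      Multiset.sum_replicate, smul_eq_mul, Multiset.card_replicate]
    ring
  · rw [Equiv.Perm.sign_of_cycleType]
    have hsum : σ.cycleType.sum = 4 * Multiset.card σ.cycleType := by
      rw [Multiset.eq_replicate_of_mem hall, Multiset.sum_replicate, smul_eq_mul,
        Multiset.card_replicate]; ring
    rw [hsum, pow_add, pow_mul]
    have h14 : ((-1 : ℤˣ) ^ 4) = 1 := by decide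
    rw [h14, one_pow, one_mul]

end AuxGeneral

section GraphAux

variable {V : Type*} [Fintype V] [DecidableEq V] {G : SimpleGraph V}

lemma isAut_one : IsAut G 1 := fun u v => by simp

lemma isAut_mul {g h : Equiv.Perm V} (hg : IsAut G g) (hh : IsAut G h) :
    IsAut G (g * h) := fun u v => by
  rw [Equiv.Perm.mul_apply, Equiv.Perm.mul_apply]
  exact (hg _ _).trans (hh u v)

lemma isAut_inv {g : Equiv.Perm V} (hg : IsAut G g) : IsAut G g⁻¹ := by
  intro u v
  have := hg (g⁻¹ u) (g⁻¹ v)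
  simp only [← Equiv.Perm.mul_apply, mul_inv_cancel, Equiv.Perm.one_apply] at this
  exact this.symm

lemma isSArc_triple {x y z : V} (h1 : G.Adj x y) (h2 : G.Adj y z) (h3 : x ≠ z) :
    IsSArc G 2 ![x, y, z] := by
  constructor
  · intro i j hij
    fin_cases i <;> fin_cases j <;>
      simp_all [h1.ne, h2.ne, h1.ne', h2.ne'] <;> omega
  · intro i
    fin_cases i
    · simpa using h1
    · simpa using h2

lemma rigid (hreg : AutSimplyTransitive G 2) {g : Equiv.Perm V} {x y z : V}
    (h1 : G.Adj x y) (h2 : G.Adj y z) (h3 : x ≠ z) (hg : IsAut G g)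
    (f1 : g x = x) (f2 : g y = y) (f3 : g z = z) : g = 1 := by
  obtain ⟨g0, _, huniq⟩ := hreg ![x, y, z] ![x, y, z]
    (isSArc_triple h1 h2 h3) (isSArc_triple h1 h2 h3)
  have e1 := huniq g ⟨hg, by intro i; fin_cases i <;> simpa⟩
  have e2 := huniq 1 ⟨isAut_one, by intro i; simp⟩
  rw [e1, e2]

variable [DecidableRel G.Adj]

lemma card_nbr (hcubic : IsCubic G) (x : V) :
    (Finset.univ.filter (G.Adj x ·)).card = 3 := by
  have h := hcubic x
  rw [Set.ncard_eq_toFinset_card'] at h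
  rw [← h]
  congr 1
  ext y
  simp only [Finset.mem_filter, Finset.mem_univ, true_and, Set.mem_toFinset, SimpleGraph.mem_neighborSet]

lemma exists_other_nbr (hcubic : IsCubic G) {x y : V} (h : G.Adj x y) :
    ∃ z, G.Adj x z ∧ z ≠ y := by
  have hy : y ∈ Finset.univ.filter (G.Adj x ·) := by simp [h]
  have hcard : ((Finset.univ.filter (G.Adj x ·)).erase y).card = 2 := by
    rw [Finset.card_erase_of_mem hy, card_nbr hcubic]
  have : ((Finset.univ.filter (G.Adj x ·)).erase y).Nonempty := by
    rw [← Finset.card_pos, hcard]; norm_num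
  obtain ⟨z, hz⟩ := this
  rw [Finset.mem_erase, Finset.mem_filter] at hz
  exact ⟨z, hz.2.2, hz.1⟩

lemma two_other_nbrs (hcubic : IsCubic G) {x y : V} (h : G.Adj x y) :
    ∃ a b, G.Adj x a ∧ G.Adj x b ∧ a ≠ b ∧ a ≠ y ∧ b ≠ y ∧
      (∀ t, G.Adj x t → t = y ∨ t = a ∨ t = b) := by
  have hy : y ∈ Finset.univ.filter (G.Adj x ·) := by simp [h]
  have hcard : ((Finset.univ.filter (G.Adj x ·)).erase y).card = 2 := by
    rw [Finset.card_erase_of_mem hy, card_nbr hcubic]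
  obtain ⟨a, b, hab, hset⟩ := Finset.card_eq_two.1 hcard
  have haa : a ∈ (Finset.univ.filter (G.Adj x ·)).erase y := by rw [hset]; simp
  have hbb : b ∈ (Finset.univ.filter (G.Adj x ·)).erase y := by rw [hset]; simp
  rw [Finset.mem_erase, Finset.mem_filter] at haa hbb
  refine ⟨a, b, haa.2.2, hbb.2.2, hab, haa.1, hbb.1, ?_⟩
  intro t ht
  by_cases hty : t = y
  · exact Or.inl hty
  · have : t ∈ (Finset.univ.filter (G.Adj x ·)).erase y := by
      rw [Finset.mem_erase]; exact ⟨hty, by simp [ht]⟩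
    rw [hset, Finset.mem_insert, Finset.mem_singleton] at this
    exact Or.inr this

lemma swap_others (hreg : AutSimplyTransitive G 2) {p : Equiv.Perm V} {x y a b : V}
    (hadj : G.Adj x y) (hp : IsAut G p) (hp1 : p ≠ 1) (hx : p x = x) (hy : p y = y)
    (ha : G.Adj x a) (hb : G.Adj x b) (hab : a ≠ b) (hay : a ≠ y) (hby : b ≠ y)
    (hother : ∀ t, G.Adj x t → t = y ∨ t = a ∨ t = b) :
    p a = b ∧ p b = a := by
  have hpa : G.Adj x (p a) := by
    have := (hp x a).2 ha; rwa [hx] at this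
  have hpb : G.Adj x (p b) := by
    have := (hp x b).2 hb; rwa [hx] at this
  have hpay : p a ≠ y := by
    intro e; exact hay (p.injective (by rw [e, hy]))
  have hpaa : p a ≠ a := by
    intro e
    exact hp1 (rigid hreg ha.symm hadj hay hp e hx hy)
  have hane : p a = b := by
    rcases hother (p a) hpa with h' | h' | h'
    · exact absurd h' hpay
    · exact absurd h' hpaa
    · exact h'
  have hpby : p b ≠ y := by
    intro e; exact hby (p.injective (by rw [e, hy]))
  have hpbb : p b ≠ b := by
    intro e
    exact hp1 (rigid hreg hb.symm hadj hby hp e hx hy)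
  have hbne : p b = a := by
    rcases hother (p b) hpb with h' | h' | h'
    · exact absurd h' hpby
    · exact h'
    · exact absurd h' hpbb
  exact ⟨hane, hbne⟩

lemma fix_edge_unique (hreg : AutSimplyTransitive G 2) (hcubic : IsCubic G)
    {x y : V} (hadj : G.Adj x y) {p q : Equiv.Perm V}
    (hp : IsAut G p) (hq : IsAut G q) (hp1 : p ≠ 1) (hq1 : q ≠ 1)
    (hpx : p x = x) (hpy : p y = y) (hqx : q x = x) (hqy : q y = y) : p = q := by
  obtain ⟨a, b, ha, hb, hab, hay, hby, hother⟩ := two_other_nbrs hcubic hadj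
  obtain ⟨hpa, hpb⟩ := swap_others hreg hadj hp hp1 hpx hpy ha hb hab hay hby hother
  obtain ⟨hqa, hqb⟩ := swap_others hreg hadj hq hq1 hqx hqy ha hb hab hay hby hother
  have hm : IsAut G (q⁻¹ * p) := isAut_mul (isAut_inv hq) hp
  have hmx : (q⁻¹ * p) x = x := by
    rw [Equiv.Perm.mul_apply, hpx]
    exact Equiv.Perm.inv_eq_iff_eq.mpr hqx.symm
  have hmy : (q⁻¹ * p) y = y := by
    rw [Equiv.Perm.mul_apply, hpy]
    exact Equiv.Perm.inv_eq_iff_eq.mpr hqy.symm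
  have hma : (q⁻¹ * p) a = a := by
    rw [Equiv.Perm.mul_apply, hpa]
    exact Equiv.Perm.inv_eq_iff_eq.mpr hqa.symm
  have := rigid hreg ha.symm hadj hay hm hma hmx hmy
  rwa [inv_mul_eq_one, eq_comm] at this

lemma fix_edge_sq (hreg : AutSimplyTransitive G 2) (hcubic : IsCubic G)
    {x y : V} (hadj : G.Adj x y) {p : Equiv.Perm V}
    (hp : IsAut G p) (hp1 : p ≠ 1) (hpx : p x = x) (hpy : p y = y) : p * p = 1 := by
  obtain ⟨a, b, ha, hb, hab, hay, hby, hother⟩ := two_other_nbrs hcubic hadj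
  obtain ⟨hpa, hpb⟩ := swap_others hreg hadj hp hp1 hpx hpy ha hb hab hay hby hother
  refine rigid hreg ha.symm hadj hay (isAut_mul hp hp) ?_ ?_ ?_
  · rw [Equiv.Perm.mul_apply, hpa, hpb]
  · rw [Equiv.Perm.mul_apply, hpx, hpx]
  · rw [Equiv.Perm.mul_apply, hpy, hpy]

lemma exists_rev (hreg : AutSimplyTransitive G 2) (hcubic : IsCubic G)
    {x y : V} (h : G.Adj x y) : ∃ r : Equiv.Perm V, IsAut G r ∧ r x = y ∧ r y = x := by
  obtain ⟨z, hz, hzy⟩ := exists_other_nbr hcubic h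
  obtain ⟨z', hz', hz'x⟩ := exists_other_nbr hcubic h.symm
  obtain ⟨g, ⟨hg, hmap⟩, _⟩ := hreg ![z, x, y] ![z', y, x]
    (isSArc_triple hz.symm h hzy) (isSArc_triple hz'.symm h.symm hz'x)
  refine ⟨g, hg, ?_, ?_⟩
  · have := hmap 1; simpa using this
  · have := hmap 2; simpa using this

lemma rev_sq_ne_one (hnoflip : ¬ ∃ g : Equiv.Perm V, FlipInvolution G g)
    {x y : V} {r : Equiv.Perm V} (h : G.Adj x y) (hr : IsAut G r)
    (hrx : r x = y) (hry : r y = x) : r * r ≠ 1 := by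
  intro h1
  apply hnoflip
  refine ⟨r, hr, ?_, x, y, h, hrx, hry⟩
  have hrne : r ≠ 1 := by
    intro e; rw [e] at hrx; exact h.ne (by simpa using hrx)
  exact orderOf_eq_prime (by rw [pow_two]; exact h1) hrne

lemma no_fixed (hreg : AutSimplyTransitive G 2) (hcubic : IsCubic G)
    {x y : V} {r : Equiv.Perm V} (h : G.Adj x y) (hr : IsAut G r)
    (hw1 : r * r ≠ 1) (hw2 : (r * r) * (r * r) = 1) :
    ∀ z : V, r z ≠ z := by
  intro z hz
  have hr4 : ∀ t : V, r (r (r (r t))) = t := by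
    intro t
    have := congrArg (fun p => p t) hw2
    simpa [Equiv.Perm.mul_apply] using this
  have hstep : ∀ t, G.Adj z t → r (r t) = t := by
    intro t ht
    by_contra hne
    have h1 : r t ≠ t := fun e => hne (by rw [e, e])
    have h3 : r (r (r t)) ≠ t := by
      intro e
      have := congrArg r e
      rw [hr4 t] at this
      exact h1 this.symm
    have h21 : r (r t) ≠ r t := fun e => h1 (r.injective e)
    have h31 : r (r (r t)) ≠ r t := fun e => hne (r.injective e)
    have h32 : r (r (r t)) ≠ r (r t) := fun e => h1 (r.injective (r.injective e))
    have hmemN : ∀ u, G.Adj z u → G.Adj z (r u) := by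
      intro u hu
      have := (hr z u).2 hu; rwa [hz] at this
    have hsubset : ({t, r t, r (r t), r (r (r t))} : Finset V) ⊆
        Finset.univ.filter (G.Adj z ·) := by
      intro u hu
      simp only [Finset.mem_insert, Finset.mem_singleton] at hu
      rcases hu with rfl | rfl | rfl | rfl <;>
        simp [ht, hmemN _ ht, hmemN _ (hmemN _ ht), hmemN _ (hmemN _ (hmemN _ ht))]
    have hcard4 : ({t, r t, r (r t), r (r (r t))} : Finset V).card = 4 := by
      rw [Finset.card_insert_of_notMem, Finset.card_insert_of_notMem,
        Finset.card_insert_of_notMem, Finset.card_singleton]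
      · simp [h32.symm]
      · simp [h21.symm, h31.symm]
      · simp [h1.symm, Ne.symm hne, h3.symm]
    have := Finset.card_le_card hsubset
    rw [hcard4, card_nbr hcubic] at this
    omega
  -- now r*r fixes z and all its neighbors; contradiction
  obtain ⟨t₁, ht₁⟩ : ∃ t, G.Adj z t := by
    have h3 := card_nbr hcubic z
    have : (Finset.univ.filter (G.Adj z ·)).Nonempty := by
      rw [← Finset.card_pos, h3]; norm_num
    obtain ⟨t, ht⟩ := this
    exact ⟨t, (Finset.mem_filter.1 ht).2⟩
  obtain ⟨t₂, ht₂, ht₂₁⟩ := exists_other_nbr hcubic ht₁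
  apply hw1
  refine rigid hreg ht₁.symm ht₂ ht₂₁.symm (isAut_mul hr hr) ?_ ?_ ?_
  · rw [Equiv.Perm.mul_apply]; exact hstep t₁ ht₁
  · rw [Equiv.Perm.mul_apply, hz, hz]
  · rw [Equiv.Perm.mul_apply]; exact hstep t₂ ht₂

end GraphAux

section Main
variable {V : Type*} [Fintype V] [DecidableEq V] {G : SimpleGraph V}
variable [DecidableRel G.Adj]

lemma matching (hreg : AutSimplyTransitive G 2) (hcubic : IsCubic G)
    {w : Equiv.Perm V} (hw : IsAut G w) (hw1 : w ≠ 1)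
    (hw2 : ∀ z, w (w z) = z) {x : V} (hx : w x = x) :
    ∃! y, G.Adj x y ∧ w y = y := by
  have hex : ∃ y, G.Adj x y ∧ w y = y := by
    by_contra hc
    push_neg at hc
    have hclosed : ∀ a ∈ Finset.univ.filter (G.Adj x ·), w a ∈ Finset.univ.filter (G.Adj x ·) := by
      intro a ha
      rw [Finset.mem_filter] at ha ⊢
      refine ⟨Finset.mem_univ _, ?_⟩
      have := (hw x a).2 ha.2
      rwa [hx] at this
    have heven := even_card_of_inv (⇑w) (Finset.univ.filter (G.Adj x ·)) hclosed
      (fun a _ => hw2 a)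
      (fun a ha => hc a (Finset.mem_filter.1 ha).2)
    rw [card_nbr hcubic] at heven
    exact (by decide : ¬ Even 3) heven
  obtain ⟨y, hy⟩ := hex
  refine ⟨y, hy, ?_⟩
  intro y' hy'
  by_contra hne
  exact hw1 (rigid hreg hy'.1.symm hy.1 hne hw hy'.2 hx hy.2)

lemma sign_rev (hreg : AutSimplyTransitive G 2) (hcubic : IsCubic G)
    (hnoflip : ¬ ∃ g : Equiv.Perm V, FlipInvolution G g)
    {x y : V} {r : Equiv.Perm V} (hadj : G.Adj x y) (hr : IsAut G r)
    (hrx : r x = y) (hry : r y = x) : Equiv.Perm.sign r = 1 := by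
  classical
  set w : Equiv.Perm V := r * r with hwdef
  have hwap : ∀ z, w z = r (r z) := fun z => by rw [hwdef, Equiv.Perm.mul_apply]
  have hw : IsAut G w := isAut_mul hr hr
  have hw1 : w ≠ 1 := rev_sq_ne_one hnoflip hadj hr hrx hry
  have hwx : w x = x := by rw [hwap, hrx, hry]
  have hwy : w y = y := by rw [hwap, hry, hrx]
  have hsq : w * w = 1 := fix_edge_sq hreg hcubic hadj hw hw1 hwx hwy
  have hw2 : ∀ z, w (w z) = z := by
    intro z
    have := congrArg (fun p : Equiv.Perm V => p z) hsq
    simpa [Equiv.Perm.mul_apply] using this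
  have hr4 : ∀ z, r (r (r (r z))) = z := by
    intro z
    have := hw2 z
    rwa [hwap, hwap] at this
  have hnf : ∀ z, r z ≠ z := no_fixed hreg hcubic hadj hr hw1 (by rw [← hwdef]; exact hsq)
  have hwr : ∀ z, w (r z) = r (w z) := fun z => by rw [hwap, hwap]
  have hPinv : ∀ z, w z = z ↔ w (r z) = r z := by
    intro z
    constructor
    · intro h; rw [hwr, h]
    · intro h; rw [hwr] at h; exact r.injective h
  have hPinv' : ∀ z, ¬ w z = z ↔ ¬ w (r z) = r z := fun z => not_congr (hPinv z)
  set r₁ : Equiv.Perm V := Equiv.Perm.ofSubtype (r.subtypePerm (p := fun z => w z = z) (fun z => (hPinv z).symm)) with hr₁def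
  set r₂ : Equiv.Perm V := Equiv.Perm.ofSubtype (r.subtypePerm (p := fun z => ¬ w z = z) (fun z => (hPinv' z).symm)) with hr₂def
  have hr₁mem : ∀ z, w z = z → r₁ z = r z := by
    intro z hz
    rw [hr₁def]
    exact Equiv.Perm.ofSubtype_subtypePerm_of_mem (p := fun z => w z = z) (fun z => (hPinv z).symm) hz
  have hr₁not : ∀ z, ¬ w z = z → r₁ z = z := by
    intro z hz
    rw [hr₁def]
    exact Equiv.Perm.ofSubtype_subtypePerm_of_not_mem (p := fun z => w z = z) (fun z => (hPinv z).symm) hz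
  have hr₂mem : ∀ z, ¬ w z = z → r₂ z = r z := by
    intro z hz
    rw [hr₂def]
    exact Equiv.Perm.ofSubtype_subtypePerm_of_mem (p := fun z => ¬ w z = z) (fun z => (hPinv' z).symm) hz
  have hr₂not : ∀ z, w z = z → r₂ z = z := by
    intro z hz
    rw [hr₂def]
    exact Equiv.Perm.ofSubtype_subtypePerm_of_not_mem (p := fun z => ¬ w z = z) (fun z => (hPinv' z).symm) (not_not_intro hz)
  have hsplit : r = r₁ * r₂ := by
    ext z
    rw [Equiv.Perm.mul_apply]
    by_cases hz : w z = z
    · rw [hr₂not z hz, hr₁mem z hz]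
    · rw [hr₂mem z hz, hr₁not _ ((hPinv' z).1 hz)]
  have hr₁sq : r₁ * r₁ = 1 := by
    ext z
    rw [Equiv.Perm.mul_apply, Equiv.Perm.one_apply]
    by_cases hz : w z = z
    · rw [hr₁mem z hz, hr₁mem _ ((hPinv z).1 hz), ← hwap]
      exact hz
    · rw [hr₁not z hz, hr₁not z hz]
  have hsupp₁ : r₁.support = Finset.univ.filter (fun z => w z = z) := by
    ext z
    rw [Equiv.Perm.mem_support, Finset.mem_filter]
    by_cases hz : w z = z
    · rw [hr₁mem z hz]
      simp [hz, hnf z]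
    · rw [hr₁not z hz]
      simp [hz]
  have hr₂4 : r₂ ^ 4 = 1 := by
    have h22 : r₂ ^ 4 = (r₂ * r₂) * (r₂ * r₂) := by
      rw [show (4 : ℕ) = 2 + 2 from rfl, pow_add, pow_two]
    rw [h22]
    ext z
    rw [Equiv.Perm.mul_apply, Equiv.Perm.mul_apply, Equiv.Perm.mul_apply,
      Equiv.Perm.one_apply]
    by_cases hz : w z = z
    · rw [hr₂not z hz, hr₂not z hz, hr₂not z hz, hr₂not z hz]
    · have h1 : ¬ w (r z) = r z := (hPinv' z).1 hz
      have h2 : ¬ w (r (r z)) = r (r z) := (hPinv' _).1 h1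
      have h3 : ¬ w (r (r (r z))) = r (r (r z)) := (hPinv' _).1 h2
      rw [hr₂mem z hz, hr₂mem _ h1, hr₂mem _ h2, hr₂mem _ h3]
      exact hr4 z
  have hr₂free : ∀ z : V, r₂ z ≠ z → r₂ (r₂ z) ≠ z := by
    intro z hz
    have hPz : ¬ w z = z := by
      intro h
      exact hz (hr₂not z h)
    have h1 : ¬ w (r z) = r z := (hPinv' z).1 hPz
    rw [hr₂mem z hPz, hr₂mem _ h1, ← hwap]
    exact hPz
  have hsupp₂ : r₂.support = Finset.univ.filter (fun z => ¬ w z = z) := by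
    ext z
    rw [Equiv.Perm.mem_support, Finset.mem_filter]
    by_cases hz : w z = z
    · rw [hr₂not z hz]
      simp [hz]
    · rw [hr₂mem z hz]
      simp [hz, hnf z]
  obtain ⟨k₁, hk₁card, hk₁sign⟩ := sign_aux2 r₁ hr₁sq
  obtain ⟨k₂, hk₂card, hk₂sign⟩ := sign_aux4 r₂ hr₂4 hr₂free
  rw [hsupp₁] at hk₁card
  rw [hsupp₂] at hk₂card
  have hnsplit : (Finset.univ.filter (fun z => w z = z)).card
      + (Finset.univ.filter (fun z => ¬ w z = z)).card = Fintype.card V :=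
    Finset.card_filter_add_card_filter_not _
  set Sall := Finset.univ.filter (fun p : V × V => G.Adj p.1 p.2) with hSalldef
  set D := Sall.filter (fun p : V × V => w p.1 = p.1 ∧ w p.2 = p.2) with hDdef
  set Q := Sall.filter (fun p : V × V => ¬ (w p.1 = p.1 ∧ w p.2 = p.2)) with hQdef
  have hQD : D.card + Q.card = Sall.card := by
    rw [hQdef, hDdef]
    exact Finset.card_filter_add_card_filter_not _
  have hSall : Sall.card = 3 * Fintype.card V := by
    rw [hSalldef, Finset.card_eq_sum_card_fiberwise
      (f := Prod.fst) (t := Finset.univ) (fun p _ => Finset.mem_univ _)]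
    have hfib : ∀ x' : V,
        ((Finset.univ.filter (fun p : V × V => G.Adj p.1 p.2)).filter
          (fun p => p.1 = x')).card = (Finset.univ.filter (G.Adj x' ·)).card := by
      intro x'
      apply Finset.card_nbij' (i := fun p => p.2) (j := fun y' => (x', y'))
      · intro p hp
        simp only [Finset.mem_coe, Finset.mem_filter, Finset.mem_univ, true_and] at hp ⊢
        rw [← hp.2]
        exact hp.1
      · intro y' hy'
        simp only [Finset.mem_coe, Finset.mem_filter, Finset.mem_univ, true_and] at hy' ⊢
        exact ⟨hy', trivial⟩
      · intro p hp
        simp only [Finset.mem_coe, Finset.mem_filter] at hp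
        exact Prod.ext hp.2.symm rfl
      · intro y' _
        rfl
    rw [Finset.sum_congr rfl (fun x' _ => (hfib x').trans (card_nbr hcubic x'))]
    rw [Finset.sum_const, smul_eq_mul, mul_comm]
    congr 1
  have hD : D.card = (Finset.univ.filter (fun z => w z = z)).card := by
    rw [Finset.card_eq_sum_card_fiberwise
      (f := Prod.fst) (t := Finset.univ.filter (fun z => w z = z)) (fun p hp => by
        rw [Finset.mem_coe, hDdef, Finset.mem_filter] at hp
        rw [Finset.mem_coe, Finset.mem_filter]
        exact ⟨Finset.mem_univ _, hp.2.1⟩)]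
    have hfib : ∀ x' ∈ Finset.univ.filter (fun z => w z = z),
        (D.filter (fun p => p.1 = x')).card = 1 := by
      intro x' hx'
      rw [Finset.mem_filter] at hx'
      obtain ⟨y₀, hy₀, huniq⟩ := matching hreg hcubic hw hw1 hw2 hx'.2
      rw [Finset.card_eq_one]
      refine ⟨(x', y₀), ?_⟩
      ext p
      simp only [hDdef, hSalldef, Finset.mem_filter, Finset.mem_univ, true_and,
        Finset.mem_singleton]
      constructor
      · rintro ⟨⟨hadj', hc1, hc2⟩, hfst⟩
        have hsnd : p.2 = y₀ := by
          apply huniq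
          rw [← hfst]
          exact ⟨hadj', hc2⟩
        rw [← hfst, ← hsnd]
      · rintro rfl
        exact ⟨⟨hy₀.1, hx'.2, hy₀.2⟩, rfl⟩
    rw [Finset.sum_congr rfl hfib, Finset.sum_const, smul_eq_mul, mul_one]
  have h8 : 8 ∣ Q.card := by
    apply free8 (Equiv.prodCongr r r) (Equiv.prodComm V V)
    · intro a ha
      simp only [hQdef, hSalldef, Finset.mem_filter, Finset.mem_univ, true_and,
        Equiv.prodCongr_apply, Prod.map_fst, Prod.map_snd] at ha ⊢
      refine ⟨(hr _ _).2 ha.1, ?_⟩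
      rintro ⟨h1, h2⟩
      rw [hwr] at h1 h2
      exact ha.2 ⟨r.injective h1, r.injective h2⟩
    · intro a ha
      simp only [hQdef, hSalldef, Finset.mem_filter, Finset.mem_univ, true_and,
        Equiv.prodComm_apply, Prod.fst_swap, Prod.snd_swap] at ha ⊢
      exact ⟨ha.1.symm, fun ⟨h1, h2⟩ => ha.2 ⟨h2, h1⟩⟩
    · intro a
      simp only [Equiv.prodCongr_apply, Prod.map_fst, Prod.map_snd, Prod.map]
      exact Prod.ext (hr4 a.1) (hr4 a.2)
    · intro a
      simp
    · intro a
      simp [Equiv.prodCongr_apply, Equiv.prodComm_apply, Prod.map]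
    · intro a ha h
      have h1 := congrArg Prod.fst h
      simp only [Equiv.prodCongr_apply, Prod.map] at h1
      exact hnf a.1 h1
    · intro a ha h
      rw [hQdef, Finset.mem_filter] at ha
      apply ha.2
      have h1 := congrArg Prod.fst h
      have h2 := congrArg Prod.snd h
      simp only [Equiv.prodCongr_apply, Prod.map] at h1 h2
      exact ⟨by rw [hwap]; exact h1, by rw [hwap]; exact h2⟩
    · intro a ha h
      rw [hQdef, Finset.mem_filter] at ha
      have hadj' : G.Adj a.1 a.2 := by
        have := ha.1
        rw [hSalldef, Finset.mem_filter] at this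
        exact this.2
      have h1 := congrArg Prod.fst h
      simp only [Equiv.prodComm_apply, Prod.fst_swap] at h1
      exact hadj'.ne' h1
    · intro a ha h
      rw [hQdef, Finset.mem_filter] at ha
      apply ha.2
      have h1 := congrArg Prod.fst h
      have h2 := congrArg Prod.snd h
      simp only [Equiv.prodComm_apply, Equiv.prodCongr_apply, Prod.map, Prod.fst_swap,
        Prod.snd_swap] at h1 h2
      constructor
      · rw [hwap, ← h1, ← h2]
      · rw [hwap, ← h2, ← h1]
    · intro a ha h
      rw [hQdef, Finset.mem_filter] at ha
      have hadj' : G.Adj a.1 a.2 := by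
        have := ha.1
        rw [hSalldef, Finset.mem_filter] at this
        exact this.2
      exfalso
      apply hnoflip
      have h1 := congrArg Prod.fst h
      have h2 := congrArg Prod.snd h
      simp only [Equiv.prodComm_apply, Equiv.prodCongr_apply, Prod.map, Prod.fst_swap,
        Prod.snd_swap] at h1 h2
      refine ⟨w, hw, ?_, a.1, a.2, hadj', ?_, ?_⟩
      · exact orderOf_eq_prime (by rw [pow_two]; exact hsq) hw1
      · rw [hwap]; exact h1.symm
      · rw [hwap]; exact h2.symm
    · intro a ha h
      rw [hQdef, Finset.mem_filter] at ha
      apply ha.2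
      have h1 := congrArg Prod.fst h
      have h2 := congrArg Prod.snd h
      simp only [Equiv.prodComm_apply, Equiv.prodCongr_apply, Prod.map, Prod.fst_swap,
        Prod.snd_swap] at h1 h2
      have e1 : r a.2 = a.1 := by
        rw [h1, hr4 a.1]
      have e2 : r a.1 = a.2 := by
        rw [h2, hr4 a.2]
      constructor
      · rw [hwap, e2, e1]
      · rw [hwap, e1, e2]
  obtain ⟨q, hq⟩ := h8
  have heven : Even (k₁ + k₂) := by
    refine ⟨q - k₂, ?_⟩
    omega
  rw [hsplit, map_mul, hk₁sign, hk₂sign, ← pow_add]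
  exact Even.neg_one_pow heven

end Main

section Final
variable {V : Type*} [Fintype V] [DecidableEq V] {G : SimpleGraph V}
variable [DecidableRel G.Adj]

lemma sign_fix_vertex (hreg : AutSimplyTransitive G 2) (hcubic : IsCubic G)
    (hnoflip : ¬ ∃ g : Equiv.Perm V, FlipInvolution G g)
    {p : Equiv.Perm V} {v : V} (hp : IsAut G p) (hpv : p v = v) :
    Equiv.Perm.sign p = 1 := by
  by_cases hp1 : p = 1
  · rw [hp1]; simp
  obtain ⟨t₀, ht₀⟩ : ∃ t, G.Adj v t := by
    have h3 := card_nbr hcubic v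
    have hnonempty : (Finset.univ.filter (G.Adj v ·)).Nonempty := by
      rw [← Finset.card_pos, h3]; norm_num
    obtain ⟨t, ht⟩ := hnonempty
    exact ⟨t, (Finset.mem_filter.1 ht).2⟩
  obtain ⟨a, b, ha, hb, hab, hat, hbt, hother⟩ := two_other_nbrs hcubic ht₀
  have hmemN : ∀ t, G.Adj v t → G.Adj v (p t) := by
    intro t ht
    have := (hp v t).2 ht
    rwa [hpv] at this
  by_cases hfix : p t₀ = t₀ ∨ p a = a ∨ p b = b
  · -- p fixes v and some neighbour u : then p is the square of an edge reversal
    obtain ⟨u, hu, hpu⟩ : ∃ u, G.Adj v u ∧ p u = u := by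
      rcases hfix with h | h | h
      · exact ⟨t₀, ht₀, h⟩
      · exact ⟨a, ha, h⟩
      · exact ⟨b, hb, h⟩
    obtain ⟨r, hraut, hrv, hru⟩ := exists_rev hreg hcubic hu
    have hw1 : r * r ≠ 1 := rev_sq_ne_one hnoflip hu hraut hrv hru
    have hwv : (r * r) v = v := by rw [Equiv.Perm.mul_apply, hrv, hru]
    have hwu : (r * r) u = u := by rw [Equiv.Perm.mul_apply, hru, hrv]
    have hpw : p = r * r :=
      fix_edge_unique hreg hcubic hu hp (isAut_mul hraut hraut) hp1 hw1 hpv hpu hwv hwu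
    rw [hpw, map_mul]
    exact Int.units_mul_self _
  · push_neg at hfix
    obtain ⟨hft, hfa, hfb⟩ := hfix
    -- p acts on the three neighbours as a 3-cycle; p³ = 1
    have hptm := hother (p t₀) (hmemN t₀ ht₀)
    have hpam := hother (p a) (hmemN a ha)
    have hpbm := hother (p b) (hmemN b hb)
    have h3fix : p (p (p t₀)) = t₀ ∧ p (p (p a)) = a := by
      rcases hptm with h | h | h
      · exact absurd h hft
      · -- p t₀ = a
        have hpa : p a = b := by
          rcases hpam with h' | h' | h'
          · exfalso
            rcases hpbm with h'' | h'' | h''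
            · exact hab (p.injective (h''.trans h'.symm)).symm
            · exact hbt (p.injective (h''.trans h.symm))
            · exact hfb h''
          · exact absurd h' hfa
          · exact h'
        have hpb : p b = t₀ := by
          rcases hpbm with h'' | h'' | h''
          · exact h''
          · exact absurd (p.injective (h''.trans h.symm)) hbt
          · exact absurd h'' hfb
        constructor
        · rw [h, hpa, hpb]
        · rw [hpa, hpb, h]
      · -- p t₀ = b
        have hpb : p b = a := by
          rcases hpbm with h'' | h'' | h''
          · exfalso
            rcases hpam with h' | h' | h'
            · exact hab (p.injective (h'.trans h''.symm))
            · exact hfa h'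
            · exact hat (p.injective (h'.trans h.symm))
          · exact h''
          · exact absurd h'' hfb
        have hpa : p a = t₀ := by
          rcases hpam with h' | h' | h'
          · exact h'
          · exact absurd h' hfa
          · exact absurd (p.injective (h'.trans h.symm)) hat
        constructor
        · rw [h, hpb, hpa]
        · rw [hpa, h, hpb]
    have hcube : p * p * p = 1 := by
      refine rigid hreg ht₀.symm ha hat.symm (isAut_mul (isAut_mul hp hp) hp) ?_ ?_ ?_
      · rw [Equiv.Perm.mul_apply, Equiv.Perm.mul_apply]
        exact h3fix.1
      · rw [Equiv.Perm.mul_apply, Equiv.Perm.mul_apply, hpv, hpv, hpv]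
      · rw [Equiv.Perm.mul_apply, Equiv.Perm.mul_apply]
        exact h3fix.2
    have hs := congrArg Equiv.Perm.sign hcube
    rw [map_mul, map_mul, Int.units_mul_self, one_mul, map_one] at hs
    exact hs


end Final

/-- a connected cubic graph of type `{2^2}` (full automorphism
group 2-regular, with no edge-flipping involution) has no odd automorphisms. -/
theorem stmt11 {V : Type*} [Fintype V] [DecidableEq V] (G : SimpleGraph V)
    (hconn : G.Connected) (hcubic : IsCubic G)
    (hreg : AutSimplyTransitive G 2)
    (hnoflip : ¬ ∃ g : Equiv.Perm V, FlipInvolution G g) :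
    ∀ g : Equiv.Perm V, IsAut G g → Equiv.Perm.sign g = 1 := by

  haveI : DecidableRel G.Adj := Classical.decRel _
  have hne : Nonempty V := hconn.nonempty
  obtain ⟨v₀⟩ := hne
  have step : ∀ {u x : V}, G.Walk u x →
      (∃ h : Equiv.Perm V, IsAut G h ∧ Equiv.Perm.sign h = 1 ∧ h v₀ = u) →
      (∃ h : Equiv.Perm V, IsAut G h ∧ Equiv.Perm.sign h = 1 ∧ h v₀ = x) := by
    intro u x wlk
    induction wlk with
    | nil => exact id
    | cons hadj pw ih =>
      rintro ⟨h0, h0aut, h0sign, h0v⟩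
      obtain ⟨r, hraut, hrx, hry⟩ := exists_rev hreg hcubic hadj
      have hrsign := sign_rev hreg hcubic hnoflip hadj hraut hrx hry
      exact ih ⟨r * h0, isAut_mul hraut h0aut,
        by rw [map_mul, hrsign, h0sign, mul_one],
        by rw [Equiv.Perm.mul_apply, h0v, hrx]⟩
  intro g hg
  obtain ⟨h, hhaut, hhsign, hhv⟩ := step ((hconn.preconnected v₀ (g v₀)).some)
    ⟨1, isAut_one, by simp, rfl⟩
  have hfixv : (h⁻¹ * g) v₀ = v₀ := by
    rw [Equiv.Perm.mul_apply, ← hhv, ← Equiv.Perm.mul_apply, inv_mul_cancel, Equiv.Perm.one_apply]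
  have hsp := sign_fix_vertex hreg hcubic hnoflip (isAut_mul (isAut_inv hhaut) hg) hfixv
  have hgs : g = h * (h⁻¹ * g) := by group
  rw [hgs, map_mul, hhsign, hsp, mul_one]
end
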